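/- arXiv:2604.21422 — 5 statements merged into one kernel-verified Lean document; each statement's English description precedes it below -/
import Mathlib

section
/- Let m ≥ 2, h > 0, γ > 0, p > 1, and let g_a be the diffusivity g_a(r) = 1 if 0 ≤ r < γ, g_a(r) = (γ/r)^{p/2} if r ≥ γ. For U ∈ ℝ^m define the m×m matrix A(U) by: a_{i,i+1} = a_{i+1,i} = g_i/h² for i = 1,…,m−1 where g_i = g_a((U_{i+1} − U_i)²/h²); a_{i,i} = −(g_{i−1} + g_i)/h² for i = 2,…,m−1; a_{1,1} = −g_1/h²; a_{m,m} = −g_{m−1}/h²; and a_{i,j} = 0 otherwise. Then for every K > 0 and all U, V ∈ ℝ^m with ‖U‖₁ ≤ K and ‖V‖₁ ≤ K, one has ‖A(U) − A(V)‖₁ ≤ M·‖U − V‖₁ with M = 8·K·L/h⁴ and L = p/(2γ), where ‖A‖₁ = max_j ∑_i |a_{i,j}| is the matrix norm induced by the ℓ¹ vector norm. -/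
/-- The proposed diffusivity `g_a`: `g_a(r) = 1` for `0 ≤ r < γ` and
`g_a(r) = (γ/r)^{p/2}` for `r ≥ γ`. -/
noncomputable def ga (γ p r : ℝ) : ℝ :=
  if r < γ then 1 else (γ / r) ^ (p / 2)

/-- The tridiagonal matrix `A(U)` of the 1-D semi-discretization (0-based
indices): `a_{i,i+1} = a_{i+1,i} = g_i/h²` with
`g_i = g((U_{i+1} − U_i)²/h²)`, diagonal entries
`a_{i,i} = −(g_{i−1} + g_i)/h²` (dropping `g_{i−1}` in the first row and `g_i`
in the last row, reflecting the Neumann boundary conditions), and `0` elsewhere. -/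
noncomputable def diffMat (m : ℕ) (h : ℝ) (g : ℝ → ℝ) (U : Fin m → ℝ) :
    Matrix (Fin m) (Fin m) ℝ := fun i j =>
  let V : ℕ → ℝ := fun l => if hl : l < m then U ⟨l, hl⟩ else 0
  let gg : ℕ → ℝ := fun l => g ((V (l + 1) - V l) ^ 2 / h ^ 2)
  if (j : ℕ) = (i : ℕ) + 1 then gg (i : ℕ) / h ^ 2
  else if (i : ℕ) = (j : ℕ) + 1 then gg (j : ℕ) / h ^ 2
  else if i = j then
    -(((if 0 < (i : ℕ) then gg ((i : ℕ) - 1) else 0) +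
       (if (i : ℕ) + 1 < m then gg (i : ℕ) else 0)) / h ^ 2)
  else 0

/-- The power part of `ga` is `(p/(2γ))`-Lipschitz on `[γ, ∞)`. -/
lemma lip_f (γ p : ℝ) (hγ : 0 < γ) (hp : 1 < p) :
    ∀ r ∈ Set.Ici γ, ∀ s ∈ Set.Ici γ,
      |(γ / r) ^ (p / 2) - (γ / s) ^ (p / 2)| ≤ p / (2 * γ) * |r - s| := by
  intro r hr s hs
  have key := Convex.norm_image_sub_le_of_norm_hasDerivWithin_le
    (f := fun y => (γ / y) ^ (p / 2))
    (f' := fun x => γ * -(x ^ 2)⁻¹ * (p / 2) * (γ / x) ^ (p / 2 - 1))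
    (C := p / (2 * γ)) (s := Set.Ici γ) ?_ ?_ (convex_Ici γ) hs hr
  · simpa [Real.norm_eq_abs] using key
  · intro x hx
    have hx0 : (0:ℝ) < x := lt_of_lt_of_le hγ hx
    have h1 : HasDerivAt (fun y : ℝ => γ / y) (γ * -(x ^ 2)⁻¹) x := by
      simpa [div_eq_mul_inv] using (hasDerivAt_inv (ne_of_gt hx0)).const_mul γ
    exact (h1.rpow_const (Or.inl (by positivity))).hasDerivWithinAt
  · intro x hx
    have hx0 : (0:ℝ) < x := lt_of_lt_of_le hγ hx
    have hq : (γ / x) ^ (p / 2 - 1) * (γ / x) = (γ / x) ^ (p / 2) := by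
      rw [← Real.rpow_add_one (by positivity)]
      ring_nf
    have hle1 : (γ / x) ^ (p / 2) ≤ 1 :=
      Real.rpow_le_one (by positivity) (by rw [div_le_one hx0]; exact hx) (by positivity)
    have hpos : (0:ℝ) < (γ / x) ^ (p / 2) := by positivity
    show ‖γ * -(x ^ 2)⁻¹ * (p / 2) * (γ / x) ^ (p / 2 - 1)‖ ≤ p / (2 * γ)
    rw [Real.norm_eq_abs]
    have heq : γ * -(x ^ 2)⁻¹ * (p / 2) * (γ / x) ^ (p / 2 - 1)
        = -(p / 2 * ((γ / x) ^ (p / 2) * x⁻¹)) := by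
      rw [← hq]; field_simp
    rw [heq, abs_neg, abs_of_nonneg (by positivity)]
    have hx1 : x⁻¹ ≤ γ⁻¹ := inv_anti₀ hγ hx
    calc p / 2 * ((γ / x) ^ (p / 2) * x⁻¹) ≤ p / 2 * (1 * γ⁻¹) := by
          apply mul_le_mul_of_nonneg_left _ (by positivity)
          exact mul_le_mul hle1 hx1 (by positivity) zero_le_one
      _ = p / (2 * γ) := by field_simp

/-- `ga` is globally `(p/(2γ))`-Lipschitz. -/
lemma ga_lip (γ p : ℝ) (hγ : 0 < γ) (hp : 1 < p) (r s : ℝ) :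
    |ga γ p r - ga γ p s| ≤ p / (2 * γ) * |r - s| := by
  have hL : (0:ℝ) ≤ p / (2 * γ) := by positivity
  have hgaγ : (γ / γ) ^ (p / 2) = 1 := by
    rw [div_self (ne_of_gt hγ), Real.one_rpow]
  unfold ga
  split_ifs with h1 h2 h2
  · simpa using mul_nonneg hL (abs_nonneg _)
  · calc |1 - (γ / s) ^ (p / 2)| = |(γ / γ) ^ (p / 2) - (γ / s) ^ (p / 2)| := by rw [hgaγ]
      _ ≤ p / (2 * γ) * |γ - s| :=
          lip_f γ p hγ hp γ Set.self_mem_Ici s (Set.mem_Ici.mpr (le_of_not_gt h2))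
      _ ≤ p / (2 * γ) * |r - s| := by
          apply mul_le_mul_of_nonneg_left _ hL
          rw [abs_of_nonpos (by linarith [le_of_not_gt h2]),
            abs_of_nonpos (by linarith [le_of_not_gt h2])]
          linarith
  · calc |(γ / r) ^ (p / 2) - 1| = |(γ / r) ^ (p / 2) - (γ / γ) ^ (p / 2)| := by rw [hgaγ]
      _ ≤ p / (2 * γ) * |r - γ| :=
          lip_f γ p hγ hp r (Set.mem_Ici.mpr (le_of_not_gt h1)) γ Set.self_mem_Ici
      _ ≤ p / (2 * γ) * |r - s| := by
          apply mul_le_mul_of_nonneg_left _ hL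
          rw [abs_of_nonneg (by linarith [le_of_not_gt h1]),
            abs_of_nonneg (by linarith [le_of_not_gt h1])]
          linarith
  · exact lip_f γ p hγ hp r (Set.mem_Ici.mpr (le_of_not_gt h1)) s
      (Set.mem_Ici.mpr (le_of_not_gt h2))

lemma pair_le {m : ℕ} (W : Fin m → ℝ) {a b : Fin m} (hab : a ≠ b) :
    |W a| + |W b| ≤ ∑ i, |W i| := by
  have h := Finset.sum_le_sum_of_subset_of_nonneg (s := ({a, b} : Finset (Fin m)))
    (Finset.subset_univ _) (fun i _ _ => abs_nonneg (W i))
  rwa [Finset.sum_pair hab] at h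

lemma sum_ite_prop {m : ℕ} (P : ℕ → Prop) [DecidablePred P]
    (hP : ∀ a b : Fin m, P (a:ℕ) → P (b:ℕ) → a = b) (x : ℝ) (hx : 0 ≤ x) :
    ∑ i : Fin m, (if P (i:ℕ) then x else 0) ≤ x := by
  classical
  by_cases he : ∃ i : Fin m, P (i:ℕ)
  · obtain ⟨i0, hi0⟩ := he
    rw [Finset.sum_eq_single i0]
    · rw [if_pos hi0]
    · intro b _ hb
      rw [if_neg]
      intro hPb
      exact hb (hP b i0 hPb hi0)
    · intro hi
      exact absurd (Finset.mem_univ _) hi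
  · rw [Finset.sum_eq_zero]
    · exact hx
    · intro i _
      exact if_neg (fun hPi => he ⟨i, hPi⟩)

set_option maxHeartbeats 1000000 in
/-- The matrix map `U ↦ A(U)` built from the diffusivity `g_a`
is Lipschitz on every ℓ¹-ball of radius `K`, with constant `M = 8·K·L/h⁴`,
`L = p/(2γ)`, in the matrix norm induced by the ℓ¹ vector norm. -/
theorem stmt11 (m : ℕ) (hm : 2 ≤ m) (h γ p K : ℝ)
    (hh : 0 < h) (hγ : 0 < γ) (hp : 1 < p) (hK : 0 < K)
    (U V : Fin m → ℝ) (hU : ∑ i, |U i| ≤ K) (hV : ∑ i, |V i| ≤ K) :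
    Finset.univ.sup' (Finset.univ_nonempty_iff.mpr ⟨⟨0, by omega⟩⟩)
        (fun j : Fin m =>
          ∑ i, |diffMat m h (ga γ p) U i j - diffMat m h (ga γ p) V i j|)
      ≤ (8 * K * (p / (2 * γ)) / h ^ 4) * ∑ i, |U i - V i| := by
  have hS0 : (0:ℝ) ≤ ∑ i, |U i - V i| := Finset.sum_nonneg fun i _ => abs_nonneg _
  set S := ∑ i, |U i - V i| with hSdef
  set B := p / (2 * γ) * (2 * K) * S / h ^ 2 with hBdef
  have hh2 : (0:ℝ) < h ^ 2 := by positivity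
  have hB0 : (0:ℝ) ≤ B := by
    apply div_nonneg _ (le_of_lt hh2)
    exact mul_nonneg (mul_nonneg (by positivity) (by positivity)) hS0
  -- the key Lipschitz bound on the g-coefficients
  have key : ∀ l : ℕ, l + 1 < m →
      |ga γ p (((if hl : l + 1 < m then U ⟨l + 1, hl⟩ else 0) -
          if hl : l < m then U ⟨l, hl⟩ else 0) ^ 2 / h ^ 2) -
       ga γ p (((if hl : l + 1 < m then V ⟨l + 1, hl⟩ else 0) -
          if hl : l < m then V ⟨l, hl⟩ else 0) ^ 2 / h ^ 2)| ≤ B := by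
    intro l hl
    have hlm : l < m := by omega
    rw [dif_pos hl, dif_pos hl, dif_pos hlm, dif_pos hlm]
    set a := U ⟨l + 1, hl⟩ - U ⟨l, hlm⟩ with ha
    set b := V ⟨l + 1, hl⟩ - V ⟨l, hlm⟩ with hb
    have hne : (⟨l + 1, hl⟩ : Fin m) ≠ ⟨l, hlm⟩ := by
      simp only [ne_eq, Fin.mk.injEq]
      omega
    have haK : |a| ≤ K := by
      calc |a| ≤ |U ⟨l + 1, hl⟩| + |U ⟨l, hlm⟩| := abs_sub _ _
        _ ≤ ∑ i, |U i| := pair_le U hne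
        _ ≤ K := hU
    have hbK : |b| ≤ K := by
      calc |b| ≤ |V ⟨l + 1, hl⟩| + |V ⟨l, hlm⟩| := abs_sub _ _
        _ ≤ ∑ i, |V i| := pair_le V hne
        _ ≤ K := hV
    have habS : |a - b| ≤ S := by
      have e : a - b = (U ⟨l + 1, hl⟩ - V ⟨l + 1, hl⟩) - (U ⟨l, hlm⟩ - V ⟨l, hlm⟩) := by
        rw [ha, hb]; ring
      calc |a - b| = |(U ⟨l + 1, hl⟩ - V ⟨l + 1, hl⟩) - (U ⟨l, hlm⟩ - V ⟨l, hlm⟩)| := by rw [e]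
        _ ≤ |(fun i => U i - V i) ⟨l + 1, hl⟩| + |(fun i => U i - V i) ⟨l, hlm⟩| := abs_sub _ _
        _ ≤ ∑ i, |U i - V i| := pair_le (fun i => U i - V i) hne
    have habK : |a + b| ≤ 2 * K := by
      calc |a + b| ≤ |a| + |b| := abs_add_le _ _
        _ ≤ 2 * K := by linarith
    calc |ga γ p (a ^ 2 / h ^ 2) - ga γ p (b ^ 2 / h ^ 2)|
        ≤ p / (2 * γ) * |a ^ 2 / h ^ 2 - b ^ 2 / h ^ 2| := ga_lip γ p hγ hp _ _
      _ = p / (2 * γ) * (|a + b| * |a - b|) / h ^ 2 := by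
          rw [div_sub_div_same, show a ^ 2 - b ^ 2 = (a + b) * (a - b) by ring,
            abs_div, abs_mul, abs_of_pos hh2]
          ring
      _ ≤ p / (2 * γ) * (2 * K * S) / h ^ 2 := by
          apply div_le_div_of_nonneg_right _ hh2.le
          apply mul_le_mul_of_nonneg_left _ (by positivity : (0:ℝ) ≤ p / (2 * γ))
          exact mul_le_mul habK habS (abs_nonneg _) (by positivity)
      _ = B := by rw [hBdef]; ring
  -- entrywise bound
  have hentry : ∀ i j : Fin m,
      |diffMat m h (ga γ p) U i j - diffMat m h (ga γ p) V i j| ≤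
        (if (j:ℕ) = (i:ℕ) + 1 then B / h ^ 2 else 0) +
        (if (i:ℕ) = (j:ℕ) + 1 then B / h ^ 2 else 0) +
        (if i = j then 2 * (B / h ^ 2) else 0) := by
    intro i j
    simp only [diffMat]
    by_cases h1 : (j:ℕ) = (i:ℕ) + 1
    · have hc2 : ¬((i:ℕ) = (j:ℕ) + 1) := by omega
      have hc3 : ¬(i = j) := by
        intro e; rw [e] at h1; omega
      rw [if_pos h1, if_pos h1, if_pos h1, if_neg hc2, if_neg hc3, add_zero, add_zero,
        div_sub_div_same, abs_div, abs_of_pos hh2]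
      exact div_le_div_of_nonneg_right (key (i:ℕ) (by have := j.isLt; omega)) hh2.le
    · by_cases h2 : (i:ℕ) = (j:ℕ) + 1
      · have hc3 : ¬(i = j) := by
          intro e; rw [e] at h2; omega
        rw [if_neg h1, if_neg h1, if_neg h1, if_pos h2, if_pos h2, if_pos h2, if_neg hc3,
          zero_add, add_zero, div_sub_div_same, abs_div, abs_of_pos hh2]
        exact div_le_div_of_nonneg_right (key (j:ℕ) (by have := i.isLt; omega)) hh2.le
      · by_cases h3 : i = j
        · rw [if_neg h1, if_neg h1, if_neg h1, if_neg h2, if_neg h2, if_neg h2,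
            if_pos h3, if_pos h3, if_pos h3, zero_add, zero_add]
          set xU := (if 0 < (i:ℕ) then
              ga γ p (((if hl : (i:ℕ) - 1 + 1 < m then U ⟨(i:ℕ) - 1 + 1, hl⟩ else 0) -
                if hl : (i:ℕ) - 1 < m then U ⟨(i:ℕ) - 1, hl⟩ else 0) ^ 2 / h ^ 2)
            else 0) with hxU
          set yU := (if (i:ℕ) + 1 < m then
              ga γ p (((if hl : (i:ℕ) + 1 < m then U ⟨(i:ℕ) + 1, hl⟩ else 0) -
                if hl : (i:ℕ) < m then U ⟨(i:ℕ), hl⟩ else 0) ^ 2 / h ^ 2)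
            else 0) with hyU
          set xV := (if 0 < (i:ℕ) then
              ga γ p (((if hl : (i:ℕ) - 1 + 1 < m then V ⟨(i:ℕ) - 1 + 1, hl⟩ else 0) -
                if hl : (i:ℕ) - 1 < m then V ⟨(i:ℕ) - 1, hl⟩ else 0) ^ 2 / h ^ 2)
            else 0) with hxV
          set yV := (if (i:ℕ) + 1 < m then
              ga γ p (((if hl : (i:ℕ) + 1 < m then V ⟨(i:ℕ) + 1, hl⟩ else 0) -
                if hl : (i:ℕ) < m then V ⟨(i:ℕ), hl⟩ else 0) ^ 2 / h ^ 2)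
            else 0) with hyV
          have d1 : |xU - xV| ≤ B := by
            rw [hxU, hxV]
            by_cases hi : 0 < (i:ℕ)
            · rw [if_pos hi, if_pos hi]
              exact key ((i:ℕ) - 1) (by have := i.isLt; omega)
            · rw [if_neg hi, if_neg hi]
              simpa using hB0
          have d2 : |yU - yV| ≤ B := by
            rw [hyU, hyV]
            by_cases hi : (i:ℕ) + 1 < m
            · rw [if_pos hi, if_pos hi]
              exact key (i:ℕ) hi
            · rw [if_neg hi, if_neg hi]
              simpa using hB0
          have e : -((xU + yU) / h ^ 2) - -((xV + yV) / h ^ 2)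
              = ((xV - xU) + (yV - yU)) / h ^ 2 := by ring
          rw [e, abs_div, abs_of_pos hh2]
          have hsum : |(xV - xU) + (yV - yU)| ≤ B + B := by
            calc |(xV - xU) + (yV - yU)| ≤ |xV - xU| + |yV - yU| := abs_add_le _ _
              _ ≤ B + B := add_le_add (abs_sub_comm xU xV ▸ d1) (abs_sub_comm yU yV ▸ d2)
          calc |(xV - xU) + (yV - yU)| / h ^ 2 ≤ (B + B) / h ^ 2 :=
              div_le_div_of_nonneg_right hsum hh2.le
            _ = 2 * (B / h ^ 2) := by ring
        · rw [if_neg h1, if_neg h1, if_neg h1, if_neg h2, if_neg h2, if_neg h2,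
            if_neg h3, if_neg h3, if_neg h3]
          simp
  -- sum over a column
  apply Finset.sup'_le
  intro j _
  have hBh : (0:ℝ) ≤ B / h ^ 2 := div_nonneg hB0 (le_of_lt hh2)
  calc ∑ i, |diffMat m h (ga γ p) U i j - diffMat m h (ga γ p) V i j|
      ≤ ∑ i : Fin m, ((if (j:ℕ) = (i:ℕ) + 1 then B / h ^ 2 else 0) +
        (if (i:ℕ) = (j:ℕ) + 1 then B / h ^ 2 else 0) +
        (if i = j then 2 * (B / h ^ 2) else 0)) :=
        Finset.sum_le_sum fun i _ => hentry i j
    _ = (∑ i : Fin m, if (j:ℕ) = (i:ℕ) + 1 then B / h ^ 2 else 0) +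
        (∑ i : Fin m, if (i:ℕ) = (j:ℕ) + 1 then B / h ^ 2 else 0) +
        (∑ i : Fin m, if i = j then 2 * (B / h ^ 2) else 0) := by
        rw [Finset.sum_add_distrib, Finset.sum_add_distrib]
    _ ≤ B / h ^ 2 + B / h ^ 2 + 2 * (B / h ^ 2) := by
        apply add_le_add (add_le_add ?_ ?_) ?_
        · exact sum_ite_prop (fun n => (j:ℕ) = n + 1)
            (fun a b hA hB => Fin.ext (by omega)) _ hBh
        · exact sum_ite_prop (fun n => n = (j:ℕ) + 1)
            (fun a b hA hB => Fin.ext (by omega)) _ hBh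
        · rw [Finset.sum_ite_eq' Finset.univ j]
          simp
    _ = 4 * (B / h ^ 2) := by ring
    _ ≤ (8 * K * (p / (2 * γ)) / h ^ 4) * S := by
        rw [hBdef]
        apply le_of_eq
        field_simp
        ring
end

section
/- Let m ≥ 1 and let A be a real symmetric m×m matrix such that every row of A sums to zero and all off-diagonal entries of A are nonnegative, and let k > 0. Then W = I − k·A is invertible, every entry of W⁻¹ is nonnegative, and every row of W⁻¹ sums to 1; consequently ‖W⁻¹‖₁ = 1, where ‖·‖₁ is the matrix norm induced by the ℓ¹ vector norm (maximum absolute column sum). -/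
/-!
Write `W = 1 - k • A`. Since the rows of `A` sum to zero,
`(W x) i = x i - k * ∑ l, A i l * (x l - x i)`, and at an index `i` where `x` is minimal every
term of the sum is nonnegative. Hence `W x ≥ 0` forces `min x ≥ 0` (a discrete minimum principle).
Applied to `±x` this makes `W` injective, hence invertible, and applied to the columns of `W⁻¹`
it makes `W⁻¹` entrywise nonnegative. `W` fixes the all-ones vector, so `W⁻¹` does too, and by
symmetry its column sums are also `1`; for a nonnegative matrix these are the absolute column sums.
-/

open Matrix Finset

namespace Matrix

variable {n R : Type*} [Fintype n]

theorem sum_inv_apply_eq_one [DecidableEq n] [CommRing R] {W : Matrix n n R} (hW : IsUnit W)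
    (hrow : ∀ i, ∑ j, W i j = 1) (i : n) : ∑ j, W⁻¹ i j = 1 := by
  have hfix : W *ᵥ 1 = 1 := funext fun i => by simp [mulVec, dotProduct, hrow i]
  have hinv : W⁻¹ *ᵥ 1 = 1 := by
    rw [← hfix, mulVec_mulVec, nonsing_inv_mul W ((isUnit_iff_isUnit_det W).mp hW), hfix,
      one_mulVec]
  simpa [mulVec, dotProduct] using congrFun hinv i

variable [Field R] [LinearOrder R] [IsStrictOrderedRing R] {A : Matrix n n R}
  (hrow : ∀ i, ∑ j, A i j = 0) (hoff : ∀ i j, i ≠ j → 0 ≤ A i j)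
include hrow hoff

theorem mulVec_apply_nonneg_of_forall_le {x : n → R} {i : n} (hmin : ∀ l, x i ≤ x l) :
    0 ≤ (A *ᵥ x) i := by
  have hshift : (A *ᵥ x) i = ∑ l, A i l * (x l - x i) := by
    simp only [mulVec, dotProduct, mul_sub, sum_sub_distrib, ← sum_mul, hrow i, zero_mul,
      sub_zero]
  rw [hshift]
  refine sum_nonneg fun l _ => ?_
  rcases eq_or_ne i l with rfl | hil
  · simp
  · exact mul_nonneg (hoff i l hil) (sub_nonneg.mpr (hmin l))

variable [DecidableEq n] {k : R} (hk : 0 ≤ k)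
include hk

theorem nonneg_of_nonneg_one_sub_smul_mulVec {x : n → R} (hx : 0 ≤ (1 - k • A) *ᵥ x) :
    0 ≤ x := by
  intro j
  obtain ⟨i, -, hmin⟩ := exists_min_image univ x ⟨j, mem_univ j⟩
  have hAx : 0 ≤ (A *ᵥ x) i :=
    mulVec_apply_nonneg_of_forall_le hrow hoff fun l => hmin l (mem_univ l)
  calc 0 ≤ ((1 - k • A) *ᵥ x) i := hx i
    _ = x i - k * (A *ᵥ x) i := by simp [sub_mulVec, smul_mulVec]
    _ ≤ x i := sub_le_self _ (mul_nonneg hk hAx)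
    _ ≤ x j := hmin j (mem_univ j)

theorem isUnit_one_sub_smul : IsUnit (1 - k • A) := by
  refine mulVec_injective_iff_isUnit.mp fun x y hxy => ?_
  have hzero : (1 - k • A) *ᵥ (x - y) = 0 := by rw [mulVec_sub, hxy, sub_self]
  have hle : 0 ≤ x - y := nonneg_of_nonneg_one_sub_smul_mulVec hrow hoff hk hzero.ge
  have hge : 0 ≤ y - x := nonneg_of_nonneg_one_sub_smul_mulVec hrow hoff hk <| by
    rw [← neg_sub x y, mulVec_neg, hzero, neg_zero]
  exact le_antisymm (sub_nonneg.mp hge) (sub_nonneg.mp hle)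

theorem inv_one_sub_smul_apply_nonneg (i j : n) : 0 ≤ (1 - k • A)⁻¹ i j := by
  have hW := (isUnit_iff_isUnit_det _).mp (isUnit_one_sub_smul hrow hoff hk)
  have hcol : (1 - k • A) *ᵥ ((1 - k • A)⁻¹ *ᵥ Pi.single j 1) = Pi.single j 1 := by
    rw [mulVec_mulVec, mul_nonsing_inv _ hW, one_mulVec]
  have hnonneg := nonneg_of_nonneg_one_sub_smul_mulVec hrow hoff hk
    (x := (1 - k • A)⁻¹ *ᵥ Pi.single j 1)
    (by rw [hcol]; exact Pi.single_nonneg.mpr zero_le_one) i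
  simpa [mulVec_single_one] using hnonneg

theorem sum_inv_one_sub_smul_apply (i : n) : ∑ j, (1 - k • A)⁻¹ i j = 1 :=
  sum_inv_apply_eq_one (isUnit_one_sub_smul hrow hoff hk)
    (fun i => by simp [sub_apply, one_apply, sum_sub_distrib, ← mul_sum, hrow i]) i

end Matrix

/-- If `A` is real symmetric with zero row sums and
nonnegative off-diagonal entries and `k > 0`, then `W = I − k·A` is invertible,
`W⁻¹` has nonnegative entries and unit row sums, and consequently
`‖W⁻¹‖₁ = 1` (maximum absolute column sum). -/
theorem stmt15 (m : ℕ) (hm : 1 ≤ m) (A : Matrix (Fin m) (Fin m) ℝ)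
    (hsym : A.IsSymm) (hrow : ∀ i, ∑ j, A i j = 0)
    (hoff : ∀ i j, i ≠ j → 0 ≤ A i j) (k : ℝ) (hk : 0 < k) :
    IsUnit ((1 : Matrix (Fin m) (Fin m) ℝ) - k • A) ∧
    (∀ i j, 0 ≤ ((1 : Matrix (Fin m) (Fin m) ℝ) - k • A)⁻¹ i j) ∧
    (∀ i, ∑ j, ((1 : Matrix (Fin m) (Fin m) ℝ) - k • A)⁻¹ i j = 1) ∧
    Finset.univ.sup' (Finset.univ_nonempty_iff.mpr ⟨⟨0, by omega⟩⟩)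
        (fun j : Fin m =>
          ∑ i, |((1 : Matrix (Fin m) (Fin m) ℝ) - k • A)⁻¹ i j|) = 1 := by
  have hnonneg := inv_one_sub_smul_apply_nonneg hrow hoff hk.le
  have hrowsum := sum_inv_one_sub_smul_apply hrow hoff hk.le
  have hinvsymm : ((1 : Matrix (Fin m) (Fin m) ℝ) - k • A)⁻¹.IsSymm :=
    (isSymm_one.sub (hsym.smul k)).inv
  have hcolsum : ∀ j, ∑ i, |((1 : Matrix (Fin m) (Fin m) ℝ) - k • A)⁻¹ i j| = 1 := fun j => by
    simp only [abs_of_nonneg (hnonneg _ _), hinvsymm.apply, hrowsum]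
  refine ⟨isUnit_one_sub_smul hrow hoff hk.le, hnonneg, hrowsum, ?_⟩
  rw [sup'_congr _ rfl fun j _ => hcolsum j, sup'_const]
end

section
/- Let m ≥ 1 and let A be a real symmetric m×m matrix such that every row of A sums to zero and all off-diagonal entries of A are nonnegative, and let k > 0. Then for every x ∈ ℝ^m one has ‖(I − k·A)⁻¹ x‖₁ ≤ ‖x‖₁, where ‖·‖₁ is the ℓ¹ norm on ℝ^m. In particular, for the Picard iteration U^{ν+1} = (I − k·A(U^ν))⁻¹ U^n, where each matrix A(U^ν) is symmetric with zero row sums and nonnegative off-diagonal entries, one has ‖U^{ν+1}‖₁ ≤ ‖U^n‖₁ for all ν = 0, 1, 2, … and all k > 0. -/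
lemma key_fwd (m : ℕ) (k : ℝ) (hk : 0 < k) (A : Matrix (Fin m) (Fin m) ℝ)
    (hsym : A.IsSymm) (hrow : ∀ i, ∑ j, A i j = 0)
    (hoff : ∀ i j, i ≠ j → 0 ≤ A i j) (y : Fin m → ℝ) :
    ∑ i, |y i| ≤ ∑ i, |((1 : Matrix (Fin m) (Fin m) ℝ) - k • A).mulVec y i| := by
  classical
  set s : Fin m → ℝ := fun i => if y i < 0 then -1 else 1 with hs
  have hsy : ∀ i, s i * y i = |y i| := by
    intro i; simp only [hs]
    split
    · rw [abs_of_neg ‹_›]; ring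
    · rw [abs_of_nonneg (not_lt.1 ‹_›)]; ring
  have habs : ∀ i, |s i| = 1 := by intro i; simp only [hs]; split <;> simp
  have hcol : ∀ j, ∑ i, A i j = 0 := by
    intro j
    have : ∀ i, A i j = A j i := fun i => hsym.apply j i
    rw [Finset.sum_congr rfl fun i _ => this i, hrow j]
  have hcross : ∀ i j, 0 ≤ A i j * ((s i - s j) * (y i - y j)) := by
    intro i j
    rcases eq_or_ne i j with h | h
    · simp [h]
    · refine mul_nonneg (hoff i j h) ?_
      simp only [hs]
      rcases lt_or_ge (y i) 0 with hi | hi <;> rcases lt_or_ge (y j) 0 with hj | hj <;>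
        simp [hi, hj, not_lt.2] <;> nlinarith
  have hT' : 0 ≤ ∑ i, ∑ j, A i j * ((s i - s j) * (y i - y j)) :=
    Finset.sum_nonneg fun i _ => Finset.sum_nonneg fun j _ => hcross i j
  -- expand
  have E1 : ∑ i, ∑ j, A i j * (s i * y i) = 0 := by
    refine Finset.sum_eq_zero fun i _ => ?_
    rw [← Finset.sum_mul, hrow i, zero_mul]
  have E4 : ∑ i, ∑ j, A i j * (s j * y j) = 0 := by
    rw [Finset.sum_comm]
    refine Finset.sum_eq_zero fun j _ => ?_
    rw [← Finset.sum_mul, hcol j, zero_mul]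
  have E3 : ∑ i, ∑ j, A i j * (s j * y i) = ∑ i, ∑ j, A i j * (s i * y j) := by
    rw [Finset.sum_comm]
    refine Finset.sum_congr rfl fun i _ => Finset.sum_congr rfl fun j _ => ?_
    rw [hsym.apply i j]
  have expand : ∑ i, ∑ j, A i j * ((s i - s j) * (y i - y j)) =
      -2 * ∑ i, ∑ j, A i j * (s i * y j) := by
    have : ∀ i j, A i j * ((s i - s j) * (y i - y j)) =
        A i j * (s i * y i) - A i j * (s i * y j) - A i j * (s j * y i) + A i j * (s j * y j) := by
      intro i j; ring
    simp_rw [this, Finset.sum_add_distrib, Finset.sum_sub_distrib]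
    rw [E1, E4, E3]
    ring
  have hE2 : ∑ i, ∑ j, A i j * (s i * y j) ≤ 0 := by
    rw [expand] at hT'; linarith
  -- main chain
  have hBy : ∀ i, ((1 : Matrix (Fin m) (Fin m) ℝ) - k • A).mulVec y i
      = y i - k * ∑ j, A i j * y j := by
    intro i
    rw [Matrix.sub_mulVec, Matrix.one_mulVec, Matrix.smul_mulVec]
    simp [Matrix.mulVec, dotProduct]
  have hterm : ∀ i, s i * (((1 : Matrix (Fin m) (Fin m) ℝ) - k • A).mulVec y i)
      = |y i| - k * ∑ j, A i j * (s i * y j) := by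
    intro i
    rw [hBy, mul_sub, hsy i]
    congr 1
    rw [mul_left_comm, Finset.mul_sum]
    congr 1
    exact Finset.sum_congr rfl fun j _ => mul_left_comm _ _ _
  have step1 : ∑ i, s i * (((1 : Matrix (Fin m) (Fin m) ℝ) - k • A).mulVec y i)
      = ∑ i, |y i| - k * ∑ i, ∑ j, A i j * (s i * y j) := by
    simp_rw [hterm]
    rw [Finset.sum_sub_distrib, ← Finset.mul_sum]
  have step2 : ∑ i, s i * (((1 : Matrix (Fin m) (Fin m) ℝ) - k • A).mulVec y i)
      ≤ ∑ i, |((1 : Matrix (Fin m) (Fin m) ℝ) - k • A).mulVec y i| := by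
    refine Finset.sum_le_sum fun i _ => ?_
    calc s i * _ ≤ |s i * _| := le_abs_self _
    _ = _ := by rw [abs_mul, habs i, one_mul]
  have : ∑ i, |y i| ≤ ∑ i, s i * (((1 : Matrix (Fin m) (Fin m) ℝ) - k • A).mulVec y i) := by
    rw [step1]; nlinarith
  linarith

lemma key_inv (m : ℕ) (k : ℝ) (hk : 0 < k) (A : Matrix (Fin m) (Fin m) ℝ)
    (hsym : A.IsSymm) (hrow : ∀ i, ∑ j, A i j = 0)
    (hoff : ∀ i j, i ≠ j → 0 ≤ A i j) (x : Fin m → ℝ) :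
    ∑ i, |(((1 : Matrix (Fin m) (Fin m) ℝ) - k • A)⁻¹).mulVec x i| ≤ ∑ i, |x i| := by
  set B := (1 : Matrix (Fin m) (Fin m) ℝ) - k • A with hB
  by_cases hdet : IsUnit B.det
  · have h1 : B.mulVec (B⁻¹.mulVec x) = x := by
      rw [Matrix.mulVec_mulVec, Matrix.mul_nonsing_inv _ hdet, Matrix.one_mulVec]
    have := key_fwd m k hk A hsym hrow hoff (B⁻¹.mulVec x)
    rwa [← hB, h1] at this
  · rw [Matrix.nonsing_inv_apply_not_isUnit _ hdet]
    simp only [Matrix.zero_mulVec, Pi.zero_apply, abs_zero, Finset.sum_const_zero]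
    exact Finset.sum_nonneg fun i _ => abs_nonneg _


/-- If `A` is real symmetric with zero row sums and
nonnegative off-diagonal entries and `k > 0`, then
`‖(I − k·A)⁻¹ x‖₁ ≤ ‖x‖₁` for every `x`.  In particular, for the Picard
iteration `U^{ν+1} = (I − k·A(U^ν))⁻¹ U^n` (with `U^0 = U^n`), where each matrix
`A(U^ν)` is symmetric with zero row sums and nonnegative off-diagonal entries,
one has `‖U^{ν+1}‖₁ ≤ ‖U^n‖₁` for all `ν`. -/
theorem stmt16 (m : ℕ) (hm : 1 ≤ m) (k : ℝ) (hk : 0 < k)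
    (A : Matrix (Fin m) (Fin m) ℝ)
    (hsym : A.IsSymm) (hrow : ∀ i, ∑ j, A i j = 0)
    (hoff : ∀ i j, i ≠ j → 0 ≤ A i j)
    (Amat : (Fin m → ℝ) → Matrix (Fin m) (Fin m) ℝ)
    (hAsym : ∀ W, (Amat W).IsSymm)
    (hArow : ∀ W i, ∑ j, Amat W i j = 0)
    (hAoff : ∀ W i j, i ≠ j → 0 ≤ Amat W i j)
    (Un : Fin m → ℝ) (Useq : ℕ → Fin m → ℝ) (h0 : Useq 0 = Un)
    (hrec : ∀ ν : ℕ, Useq (ν + 1) =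
      (((1 : Matrix (Fin m) (Fin m) ℝ) - k • Amat (Useq ν))⁻¹).mulVec Un) :
    (∀ x : Fin m → ℝ,
      ∑ i, |(((1 : Matrix (Fin m) (Fin m) ℝ) - k • A)⁻¹).mulVec x i| ≤ ∑ i, |x i|) ∧
    (∀ ν : ℕ, ∑ i, |Useq (ν + 1) i| ≤ ∑ i, |Un i|) := by
  refine ⟨fun x => key_inv m k hk A hsym hrow hoff x, fun ν => ?_⟩
  rw [hrec ν]
  exact key_inv m k hk (Amat (Useq ν)) (hAsym _) (hArow _) (hAoff _) Un
end

section
/- Let m ≥ 2, h > 0, γ > 0, p > 1, k > 0, and let g_a be the diffusivity g_a(r) = 1 if 0 ≤ r < γ, g_a(r) = (γ/r)^{p/2} if r ≥ γ. For U ∈ ℝ^m let A(U) be the m×m tridiagonal matrix with entries a_{i,i+1} = a_{i+1,i} = g_i/h² where g_i = g_a((U_{i+1} − U_i)²/h²), a_{i,i} = −(g_{i−1} + g_i)/h² for 2 ≤ i ≤ m−1, a_{1,1} = −g_1/h², a_{m,m} = −g_{m−1}/h², and a_{i,j} = 0 otherwise. Then for every U⁰ ∈ ℝ^m the map G : ℝ^m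 → ℝ^m, G(U) = (I − k·A(U))⁻¹ U⁰, has at least one fixed point U* ∈ ℝ^m, i.e. there exists U* satisfying (I − k·A(U*))·U* = U⁰. -/
/-!
The equation `(I - k A(U)) U = U⁰` is the Euler–Lagrange equation of the energy
`F(U) = ∑ⱼ (Uⱼ - U⁰ⱼ)² + k ∑ᵢ Φ((Uᵢ₊₁ - Uᵢ)² / h²)`, where `Φ(s) = ∫₀ˢ g`: differentiating in
`Uⱼ` gives `∂F/∂Uⱼ = 2 (Uⱼ - U⁰ⱼ) - 2k (A(U) U)ⱼ`. Since `g ≥ 0`, `Φ ≥ 0` on `[0, ∞)`, so `F` is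
continuous and coercive; its global minimiser is a critical point, i.e. the required fixed point.
-/

open Finset Matrix Filter

theorem sum_range_ite_add_one_eq {M : Type*} [AddCommMonoid M] {n j : ℕ} (hj : j ≤ n) (c : ℕ → M) :
    (∑ i ∈ range n, if i + 1 = j then c i else 0) = if 0 < j then c (j - 1) else 0 := by
  rcases j with _ | j
  · simp
  · simp [show j < n by omega]

theorem sum_range_tridiagonal_mul {m j : ℕ} (hj : j < m) (a V : ℕ → ℝ) :
    (∑ l ∈ range m,
      (if l = j + 1 then a j
       else if j = l + 1 then a l
       else if j = l then
         -((if 0 < j then a (j - 1) else 0) + (if j + 1 < m then a j else 0))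
       else 0) * V l) =
      (if j + 1 < m then a j * (V (j + 1) - V j) else 0) -
        (if 0 < j then a (j - 1) * (V j - V (j - 1)) else 0) := by
  have hterm : ∀ l, (if l = j + 1 then a j
       else if j = l + 1 then a l
       else if j = l then
         -((if 0 < j then a (j - 1) else 0) + (if j + 1 < m then a j else 0))
       else 0) * V l =
      ((if l = j + 1 then a j * V l else 0) + (if l + 1 = j then a l * V l else 0)) +
        (if l = j then
          -((if 0 < j then a (j - 1) else 0) + (if j + 1 < m then a j else 0)) * V l else 0) := by
    intro l
    split_ifs <;> first | omega | ring
  simp only [hterm, sum_add_distrib, sum_ite_eq', mem_range, sum_range_ite_add_one_eq hj.le]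
  split_ifs <;> first | omega | ring

section DiscreteDiffusion

variable {m : ℕ}

def zeroExtend (U : Fin m → ℝ) (l : ℕ) : ℝ := if hl : l < m then U ⟨l, hl⟩ else 0

noncomputable def edgeWeight (h : ℝ) (g : ℝ → ℝ) (U : Fin m → ℝ) (l : ℕ) : ℝ :=
  g ((zeroExtend U (l + 1) - zeroExtend U l) ^ 2 / h ^ 2) / h ^ 2

theorem diffMat_mulVec_apply (h : ℝ) (g : ℝ → ℝ) (U : Fin m → ℝ) (j : Fin m) :
    (diffMat m h g U *ᵥ U) j =
      (if (j : ℕ) + 1 < m then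
        edgeWeight h g U j * (zeroExtend U (j + 1) - zeroExtend U j) else 0) -
      (if 0 < (j : ℕ) then
        edgeWeight h g U (j - 1) * (zeroExtend U j - zeroExtend U (j - 1)) else 0) := by
  set a := edgeWeight h g U
  set V := zeroExtend U
  rw [← sum_range_tridiagonal_mul j.isLt a V, sum_range, mulVec, dotProduct]
  refine sum_congr rfl fun l _ => ?_
  have hV : V l = U l := dif_pos l.isLt
  rw [hV]
  congr 1
  simp only [diffMat, Fin.ext_iff, a, edgeWeight, zeroExtend]
  split_ifs <;> first | omega | ring

theorem zeroExtend_update (U : Fin m → ℝ) (j : Fin m) (t : ℝ) (l : ℕ) :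
    zeroExtend (Function.update U j t) l = if l = j then t else zeroExtend U l := by
  unfold zeroExtend
  split_ifs with hl hlj hlj <;> first | omega | simp [Fin.ext_iff, hlj]

theorem hasDerivAt_zeroExtend_update (U : Fin m → ℝ) (j : Fin m) (l : ℕ) :
    HasDerivAt (fun t => zeroExtend (Function.update U j t) l) (if l = j then 1 else 0) (U j) := by
  simp only [zeroExtend_update]
  split_ifs
  · exact hasDerivAt_id _
  · exact hasDerivAt_const _ _

@[fun_prop]
theorem continuous_zeroExtend (l : ℕ) : Continuous fun U : Fin m → ℝ => zeroExtend U l := by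
  unfold zeroExtend
  split_ifs
  · exact continuous_apply _
  · exact continuous_const

noncomputable def discreteEnergy (h : ℝ) (Φ : ℝ → ℝ) (U : Fin m → ℝ) : ℝ :=
  ∑ i ∈ range (m - 1), Φ ((zeroExtend U (i + 1) - zeroExtend U i) ^ 2 / h ^ 2)

variable {h : ℝ} {Φ : ℝ → ℝ}

theorem continuous_discreteEnergy (hΦ : Continuous Φ) :
    Continuous (discreteEnergy (m := m) h Φ) := by
  unfold discreteEnergy
  fun_prop

theorem discreteEnergy_nonneg (hΦ : ∀ s, 0 ≤ s → 0 ≤ Φ s) (U : Fin m → ℝ) :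
    0 ≤ discreteEnergy h Φ U :=
  sum_nonneg fun _ _ => hΦ _ (by positivity)

theorem hasDerivAt_discreteEnergy_update {g : ℝ → ℝ} (hΦ : ∀ s, HasDerivAt Φ (g s) s)
    (U : Fin m → ℝ) (j : Fin m) :
    HasDerivAt (fun t => discreteEnergy h Φ (Function.update U j t))
      (-2 * (diffMat m h g U *ᵥ U) j) (U j) := by
  set V := zeroExtend U
  have hterm : ∀ i ∈ range (m - 1), HasDerivAt
      (fun t => Φ ((zeroExtend (Function.update U j t) (i + 1) -
        zeroExtend (Function.update U j t) i) ^ 2 / h ^ 2))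
      (g ((V (i + 1) - V i) ^ 2 / h ^ 2) * (2 * (V (i + 1) - V i) *
        ((if i + 1 = j then 1 else 0) - (if i = j then 1 else 0)) / h ^ 2)) (U j) := by
    intro i _
    have := (hΦ _).comp (U j) ((((hasDerivAt_zeroExtend_update U j (i + 1)).fun_sub
      (hasDerivAt_zeroExtend_update U j i)).fun_pow 2).div_const (h ^ 2))
    simp only [Function.update_eq_self] at this
    refine this.congr_deriv ?_
    push_cast
    ring
  refine (HasDerivAt.fun_sum hterm).congr_deriv ?_
  have hsplit : ∀ i, g ((V (i + 1) - V i) ^ 2 / h ^ 2) * (2 * (V (i + 1) - V i) *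
        ((if i + 1 = (j : ℕ) then 1 else 0) - (if i = (j : ℕ) then 1 else 0)) / h ^ 2) =
      2 * ((if i + 1 = j then edgeWeight h g U i * (V (i + 1) - V i) else 0) -
        (if i = j then edgeWeight h g U i * (V (i + 1) - V i) else 0)) := by
    intro i
    simp only [edgeWeight, V]
    split_ifs <;> ring
  rw [sum_congr rfl fun i _ => hsplit i, ← mul_sum, sum_sub_distrib,
    sum_range_ite_add_one_eq (by omega), sum_ite_eq', diffMat_mulVec_apply]
  simp only [mem_range, Nat.lt_sub_iff_add_lt, V]
  split_ifs <;> grind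

end DiscreteDiffusion

theorem hasDerivAt_sum_sq_sub_update {ι : Type*} [Fintype ι] [DecidableEq ι]
    (x₀ x : ι → ℝ) (j : ι) :
    HasDerivAt (fun t => ∑ i, (Function.update x j t i - x₀ i) ^ 2)
      (2 * (x j - x₀ j)) (x j) := by
  refine (HasDerivAt.fun_sum fun i _ =>
    ((hasDerivAt_pi.1 (hasDerivAt_update x j (x j)) i).sub_const (x₀ i)).fun_pow 2).congr_deriv ?_
  simp [Pi.single_apply]

theorem exists_forall_sum_sq_add_le {ι : Type*} [Fintype ι] (x₀ : ι → ℝ) {Ψ : (ι → ℝ) → ℝ}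
    (hΨ : Continuous Ψ) (hΨ₀ : ∀ x, 0 ≤ Ψ x) :
    ∃ x, ∀ y, ∑ i, (x i - x₀ i) ^ 2 + Ψ x ≤ ∑ i, (y i - x₀ i) ^ 2 + Ψ y := by
  refine Continuous.exists_forall_le (by fun_prop) (tendsto_atTop_mono (fun y => ?_)
    ((tendsto_pow_atTop two_ne_zero).comp (tendsto_dist_right_cocompact_atTop x₀)))
  have hS : 0 ≤ ∑ i, (y i - x₀ i) ^ 2 := sum_nonneg fun i _ => sq_nonneg _
  have hdist : dist y x₀ ≤ √(∑ i, (y i - x₀ i) ^ 2) :=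
    (dist_pi_le_iff (Real.sqrt_nonneg _)).2 fun i => Real.abs_le_sqrt
      (single_le_sum (fun i _ => sq_nonneg (y i - x₀ i)) (mem_univ i))
  have := (Real.le_sqrt dist_nonneg hS).1 hdist
  simp only [Function.comp_apply]
  linarith [hΨ₀ y]

theorem exists_fixedPoint_diffMat {m : ℕ} {g : ℝ → ℝ} (hg : Continuous g)
    (hg₀ : ∀ r, 0 ≤ r → 0 ≤ g r) (h : ℝ) {k : ℝ} (hk : 0 ≤ k) (U₀ : Fin m → ℝ) :
    ∃ U : Fin m → ℝ, (1 - k • diffMat m h g U) *ᵥ U = U₀ := by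
  set Φ := fun s => ∫ t in (0 : ℝ)..s, g t
  have hΦ : ∀ s, HasDerivAt Φ (g s) s := fun s => (hg.integral_hasStrictDerivAt 0 s).hasDerivAt
  have hΦ₀ : ∀ s, 0 ≤ s → 0 ≤ Φ s := fun s hs =>
    intervalIntegral.integral_nonneg hs fun t ht => hg₀ t ht.1
  have hΦc : Continuous Φ := continuous_iff_continuousAt.2 fun s => (hΦ s).continuousAt
  obtain ⟨U, hU⟩ := exists_forall_sum_sq_add_le U₀
    ((continuous_discreteEnergy (h := h) hΦc).const_smul k)
    fun V => mul_nonneg hk (discreteEnergy_nonneg hΦ₀ V)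
  refine ⟨U, funext fun j => ?_⟩
  have hmin : IsLocalMin (fun t => ∑ i, (Function.update U j t i - U₀ i) ^ 2 +
      k * discreteEnergy h Φ (Function.update U j t)) (U j) :=
    Eventually.of_forall fun t => by simpa using hU (Function.update U j t)
  have hcrit := hmin.hasDerivAt_eq_zero ((hasDerivAt_sum_sq_sub_update U₀ U j).add
    ((hasDerivAt_discreteEnergy_update hΦ U j).const_mul k))
  simp only [sub_mulVec, one_mulVec, smul_mulVec, Pi.sub_apply, Pi.smul_apply, smul_eq_mul]
  linarith

theorem ga_nonneg {γ : ℝ} (hγ : 0 < γ) (p r : ℝ) : 0 ≤ ga γ p r := by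
  unfold ga
  split_ifs with hr
  · exact zero_le_one
  · exact Real.rpow_nonneg (div_nonneg hγ.le (hγ.le.trans (not_lt.1 hr))) _

theorem continuous_ga {γ : ℝ} (hγ : 0 < γ) (p : ℝ) : Continuous (ga γ p) := by
  have : ga γ p = fun r => if γ ≤ r then (γ / r) ^ (p / 2) else 1 := by
    ext r
    simp only [ga, ← not_le, ite_not]
  rw [this]
  refine continuous_if_le continuous_const continuous_id ?_ continuousOn_const ?_
  · exact (continuousOn_const.div continuousOn_id fun r hr => (hγ.trans_le hr).ne').rpow_const
      fun r hr => Or.inl (div_pos hγ (hγ.trans_le hr)).ne'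
  · rintro r rfl
    simp [div_self hγ.ne']

theorem stmt17_general (m : ℕ) (h γ p k : ℝ)
    (hγ : 0 < γ) (hk : 0 < k)
    (U0 : Fin m → ℝ) :
    ∃ Ustar : Fin m → ℝ,
      (((1 : Matrix (Fin m) (Fin m) ℝ) -
        k • diffMat m h (ga γ p) Ustar)).mulVec Ustar = U0 :=
  exists_fixedPoint_diffMat (continuous_ga hγ p) (fun r _ => ga_nonneg hγ p r) h hk.le U0

/-- For the diffusivity `g_a` and any `k > 0` and initial
vector `U⁰`, the Picard map `G(U) = (I − k·A(U))⁻¹ U⁰` has at least one fixed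
point `U*`, i.e. there exists `U*` with `(I − k·A(U*))·U* = U⁰`. -/
theorem stmt17 (m : ℕ) (hm : 2 ≤ m) (h γ p k : ℝ)
    (hh : 0 < h) (hγ : 0 < γ) (hp : 1 < p) (hk : 0 < k)
    (U0 : Fin m → ℝ) :
    ∃ Ustar : Fin m → ℝ,
      (((1 : Matrix (Fin m) (Fin m) ℝ) -
        k • diffMat m h (ga γ p) Ustar)).mulVec Ustar = U0 :=
  stmt17_general m h γ p k hγ hk U0
end

section
/- Let m ≥ 1, s ≥ 1, k > 0, and let A₁, …, A_s be real symmetric m×m matrices, each with zero row sums and nonnegative off-diagonal entries. Define Q = (1/s)·∑_{r=1}^{s} (I − s·k·A_r)⁻¹. Then each matrix I − s·k·A_r is invertible, Q is symmetric, every entry of Q is nonnegative, every row of Q sums to 1, and ‖Q·x‖₁ ≤ ‖x‖₁ for every x ∈ ℝ^m. -/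
/-- The iteration matrix of the AOS scheme:
`Q = (1/s)·∑_{r=1}^{s} (I − s·k·A_r)⁻¹`. -/
noncomputable def aosQ (m s : ℕ) (k : ℝ)
    (A : Fin s → Matrix (Fin m) (Fin m) ℝ) : Matrix (Fin m) (Fin m) ℝ :=
  ((s : ℝ)⁻¹) • ∑ r, ((1 : Matrix (Fin m) (Fin m) ℝ) - ((s : ℝ) * k) • A r)⁻¹

section Aux

variable {m : ℕ}

/-- Minimum principle: if `B` has unit row sums and nonpositive off-diagonal
entries, then at an index where `y` attains its minimum, `(B y)_p ≤ y_p`. -/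
lemma min_principle (B : Matrix (Fin m) (Fin m) ℝ)
    (hrow : ∀ i, ∑ j, B i j = 1)
    (hoff : ∀ i j, i ≠ j → B i j ≤ 0)
    (y : Fin m → ℝ) (p : Fin m) (hp : ∀ q, y p ≤ y q) :
    B.mulVec y p ≤ y p := by
  have : B.mulVec y p = ∑ q, B p q * y q := rfl
  rw [this]
  calc ∑ q, B p q * y q ≤ ∑ q, B p q * y p := by
        apply Finset.sum_le_sum
        intro q _
        rcases eq_or_ne p q with h | h
        · simp [h]
        · exact mul_le_mul_of_nonpos_left (hp q) (hoff p q h)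
    _ = y p := by rw [← Finset.sum_mul, hrow, one_mul]

/-- Core lemma: `B := 1 - c•A` is a unit and its inverse has nonnegative entries
and unit row sums; moreover it is symmetric if `A` is. -/
lemma core (hm : 1 ≤ m) (c : ℝ) (hc : 0 < c) (A : Matrix (Fin m) (Fin m) ℝ)
    (hrow : ∀ i, ∑ j, A i j = 0) (hoff : ∀ i j, i ≠ j → 0 ≤ A i j) :
    IsUnit ((1 : Matrix (Fin m) (Fin m) ℝ) - c • A) ∧
    (∀ i j, 0 ≤ ((1 : Matrix (Fin m) (Fin m) ℝ) - c • A)⁻¹ i j) ∧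
    (∀ i, ∑ j, ((1 : Matrix (Fin m) (Fin m) ℝ) - c • A)⁻¹ i j = 1) := by
  haveI : NeZero m := ⟨by omega⟩
  set B : Matrix (Fin m) (Fin m) ℝ := (1 : Matrix (Fin m) (Fin m) ℝ) - c • A with hB
  have hBrow : ∀ i, ∑ j, B i j = 1 := by
    intro i
    have : ∑ j, B i j = ∑ j, ((1 : Matrix (Fin m) (Fin m) ℝ) i j - c * A i j) := by
      apply Finset.sum_congr rfl
      intro j _
      simp [hB, Matrix.sub_apply, Matrix.smul_apply]
    rw [this, Finset.sum_sub_distrib, ← Finset.mul_sum, hrow, mul_zero, sub_zero]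
    simp [Matrix.one_apply]
  have hBoff : ∀ i j, i ≠ j → B i j ≤ 0 := by
    intro i j hij
    have : B i j = 0 - c * A i j := by
      simp [hB, Matrix.sub_apply, Matrix.smul_apply, Matrix.one_apply_ne hij]
    rw [this, zero_sub, neg_nonpos]
    exact mul_nonneg hc.le (hoff i j hij)
  -- maximum principle from the minimum principle applied to `-y`
  have max_principle : ∀ (y : Fin m → ℝ) (p : Fin m), (∀ q, y q ≤ y p) →
      y p ≤ B.mulVec y p := by
    intro y p hp
    have := min_principle B hBrow hBoff (-y) p (fun q => neg_le_neg (hp q))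
    have hmv : B.mulVec (-y) = -(B.mulVec y) := by
      rw [← Matrix.mulVec_neg]
    rw [hmv] at this
    simpa using this
  -- injectivity of mulVec
  have hinj : Function.Injective B.mulVec := by
    have : ∀ y, B.mulVec y = 0 → y = 0 := by
      intro y hy
      funext i
      obtain ⟨p, _, hp⟩ := Finset.exists_min_image Finset.univ y ⟨i, Finset.mem_univ i⟩
      obtain ⟨q, _, hq⟩ := Finset.exists_max_image Finset.univ y ⟨i, Finset.mem_univ i⟩
      have h1 : B.mulVec y p ≤ y p :=
        min_principle B hBrow hBoff y p (fun r => hp r (Finset.mem_univ r))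
      have h2 : y q ≤ B.mulVec y q :=
        max_principle y q (fun r => hq r (Finset.mem_univ r))
      rw [hy] at h1 h2
      simp only [Pi.zero_apply] at h1 h2
      have hle : y i ≤ 0 := le_trans (hq i (Finset.mem_univ i)) h2
      have hge : 0 ≤ y i := le_trans h1 (hp i (Finset.mem_univ i))
      exact le_antisymm hle hge
    intro x y hxy
    have h0 : B.mulVec (x - y) = 0 := by
      rw [Matrix.mulVec_sub, hxy, sub_self]
    exact sub_eq_zero.mp (this _ h0)
  have hunit : IsUnit B := Matrix.mulVec_injective_iff_isUnit.mp hinj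
  refine ⟨hunit, ?_, ?_⟩
  · -- nonnegativity of B⁻¹
    intro i j
    set y : Fin m → ℝ := fun q => B⁻¹ q j with hy
    have hBy : B.mulVec y = fun i => (1 : Matrix (Fin m) (Fin m) ℝ) i j := by
      funext i
      have : B.mulVec y i = (B * B⁻¹) i j := by
        simp [Matrix.mulVec, Matrix.mul_apply, dotProduct, hy]
      rw [this, Matrix.mul_nonsing_inv B (B.isUnit_iff_isUnit_det.mp hunit)]
    obtain ⟨p, _, hp⟩ := Finset.exists_min_image Finset.univ y
      ⟨i, Finset.mem_univ i⟩
    have h1 : B.mulVec y p ≤ y p :=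
      min_principle B hBrow hBoff y p (fun r => hp r (Finset.mem_univ r))
    have h0 : 0 ≤ B.mulVec y p := by
      rw [hBy]
      by_cases h : p = j <;> simp [Matrix.one_apply, h]
    exact le_trans (le_trans h0 h1) (hp i (Finset.mem_univ i))
  · -- row sums of B⁻¹
    intro i
    have hones : B.mulVec (fun _ => (1 : ℝ)) = fun _ => 1 := by
      funext p
      simp [Matrix.mulVec, dotProduct, hBrow p]
    have : B⁻¹.mulVec (fun _ => (1 : ℝ)) = fun _ => 1 := by
      conv_lhs => rw [← hones]
      rw [Matrix.mulVec_mulVec, Matrix.nonsing_inv_mul B (B.isUnit_iff_isUnit_det.mp hunit)]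
      funext p
      simp [Matrix.mulVec, dotProduct, Matrix.one_apply]
    have := congrFun this i
    simpa [Matrix.mulVec, dotProduct] using this

end Aux

/-- If `A₁, …, A_s` are real symmetric matrices with zero row
sums and nonnegative off-diagonal entries and `k > 0`, then each `I − s·k·A_r`
is invertible, and the AOS matrix `Q = (1/s)·∑_r (I − s·k·A_r)⁻¹` is symmetric,
has nonnegative entries and unit row sums, and satisfies `‖Q·x‖₁ ≤ ‖x‖₁`. -/
theorem stmt18 (m s : ℕ) (hm : 1 ≤ m) (hs : 1 ≤ s) (k : ℝ) (hk : 0 < k)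
    (A : Fin s → Matrix (Fin m) (Fin m) ℝ)
    (hsym : ∀ r, (A r).IsSymm)
    (hrow : ∀ r i, ∑ j, A r i j = 0)
    (hoff : ∀ r i j, i ≠ j → 0 ≤ A r i j) :
    (∀ r, IsUnit ((1 : Matrix (Fin m) (Fin m) ℝ) - ((s : ℝ) * k) • A r)) ∧
    (aosQ m s k A).IsSymm ∧
    (∀ i j, 0 ≤ aosQ m s k A i j) ∧
    (∀ i, ∑ j, aosQ m s k A i j = 1) ∧
    (∀ x : Fin m → ℝ, ∑ i, |(aosQ m s k A).mulVec x i| ≤ ∑ i, |x i|) := by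
  have hc : (0 : ℝ) < (s : ℝ) * k := by
    apply mul_pos _ hk
    exact_mod_cast Nat.lt_of_lt_of_le Nat.zero_lt_one hs
  have key := fun r => core hm ((s : ℝ) * k) hc (A r) (hrow r) (hoff r)
  set B : Fin s → Matrix (Fin m) (Fin m) ℝ :=
    fun r => (1 : Matrix (Fin m) (Fin m) ℝ) - ((s : ℝ) * k) • A r with hBdef
  have hQ : aosQ m s k A = ((s : ℝ)⁻¹) • ∑ r, (B r)⁻¹ := rfl
  have hsnz : (s : ℝ) ≠ 0 := by positivity
  have hQsymm : ∀ i j, aosQ m s k A i j = aosQ m s k A j i := by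
    intro i j
    have hBsym : ∀ r : Fin s, Matrix.transpose ((B r)⁻¹) = (B r)⁻¹ := by
      intro r
      rw [Matrix.transpose_nonsing_inv]
      congr 1
      rw [Matrix.transpose_sub, Matrix.transpose_one, Matrix.transpose_smul, (hsym r).eq]
    have := fun r => congrFun (congrFun (hBsym r) i) j
    simp only [Matrix.transpose_apply] at this
    simp [hQ, Matrix.smul_apply, Matrix.sum_apply, this]
  refine ⟨fun r => (key r).1, ?_, ?_, ?_, ?_⟩
  · ext i j
    simp [Matrix.transpose_apply, hQsymm i j]
  · intro i j
    rw [hQ]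
    simp only [Matrix.smul_apply, Matrix.sum_apply, smul_eq_mul]
    apply mul_nonneg (by positivity)
    exact Finset.sum_nonneg fun r _ => (key r).2.1 i j
  · intro i
    rw [hQ]
    simp only [Matrix.smul_apply, Matrix.sum_apply, smul_eq_mul]
    rw [← Finset.mul_sum, Finset.sum_comm]
    have : ∀ r ∈ Finset.univ, ∑ j, (B r)⁻¹ i j = 1 := fun r _ => (key r).2.2 i
    rw [Finset.sum_congr rfl this]
    simp [hsnz]
  · intro x
    have hQnn : ∀ i j, 0 ≤ aosQ m s k A i j := by
      intro i j
      rw [hQ]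
      simp only [Matrix.smul_apply, Matrix.sum_apply, smul_eq_mul]
      apply mul_nonneg (by positivity)
      exact Finset.sum_nonneg fun r _ => (key r).2.1 i j
    have hQrow : ∀ i, ∑ j, aosQ m s k A i j = 1 := by
      intro i
      rw [hQ]
      simp only [Matrix.smul_apply, Matrix.sum_apply, smul_eq_mul]
      rw [← Finset.mul_sum, Finset.sum_comm]
      have : ∀ r ∈ Finset.univ, ∑ j, (B r)⁻¹ i j = 1 := fun r _ => (key r).2.2 i
      rw [Finset.sum_congr rfl this]
      simp [hsnz]
    calc ∑ i, |(aosQ m s k A).mulVec x i|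
        ≤ ∑ i, ∑ j, aosQ m s k A i j * |x j| := by
          apply Finset.sum_le_sum
          intro i _
          have : (aosQ m s k A).mulVec x i = ∑ j, aosQ m s k A i j * x j := rfl
          rw [this]
          calc |∑ j, aosQ m s k A i j * x j| ≤ ∑ j, |aosQ m s k A i j * x j| :=
                Finset.abs_sum_le_sum_abs _ _
            _ = ∑ j, aosQ m s k A i j * |x j| := by
                apply Finset.sum_congr rfl
                intro j _
                rw [abs_mul, abs_of_nonneg (hQnn i j)]
      _ = ∑ j, (∑ i, aosQ m s k A i j) * |x j| := by
          rw [Finset.sum_comm]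
          simp [Finset.sum_mul]
      _ = ∑ j, |x j| := by
          apply Finset.sum_congr rfl
          intro j _
          have : ∑ i, aosQ m s k A i j = ∑ i, aosQ m s k A j i := by
            apply Finset.sum_congr rfl
            intro i _
            exact hQsymm i j
          rw [this, hQrow j, one_mul]
end
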